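/- Let ℓ be a positive integer, let G be a {P₅, K_{ℓ,ℓ}}-free graph, let r ∈ V(G), and let x, y be two distinct nonadjacent neighbors of r. Then either α(G[W_x]) ≤ ℓ−1 or α(G[W_y]) ≤ ℓ−1. -/

import Mathlib

open SimpleGraph

/-! If `a ∈ W_x` and `b ∈ W_y` were nonadjacent, `a – x – r – y – b` would be an induced
`P₅`. So `W_x` is complete to `W_y`, and independent sets of size `ℓ` in both would induce
`K_{ℓ,ℓ}`. -/

/-- A set of vertices is independent (pairwise nonadjacent). -/
def IndepSet {V : Type*} (G : SimpleGraph V) (s : Set V) : Prop :=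
  s.Pairwise fun a b => ¬ G.Adj a b

/-- The independence number of the subgraph of `G` induced by `S`. -/
noncomputable def indepNumOn {V : Type*} (G : SimpleGraph V) (S : Set V) : ℕ :=
  sSup {n | ∃ s : Finset V, ↑s ⊆ S ∧ IndepSet G ↑s ∧ s.card = n}

/-- The independence number of `G`. -/
noncomputable def indepNum {V : Type*} (G : SimpleGraph V) : ℕ :=
  indepNumOn G Set.univ

/-- `G` contains no induced subgraph isomorphic to `H`. -/
def Free {W V : Type*} (H : SimpleGraph W) (G : SimpleGraph V) : Prop :=
  IsEmpty (H ↪g G)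

/-- The closed neighborhood of a vertex. -/
def closedNbhd {V : Type*} (G : SimpleGraph V) (v : V) : Set V :=
  insert v (G.neighborSet v)

/-- A tree-decomposition of `G` with nodes indexed by `ι`: a tree `T` together with
bags such that every vertex appears in a nonempty connected collection of bags and
every edge is contained in some bag. -/
structure TreeDecomp {V : Type*} (G : SimpleGraph V) (ι : Type*) where
  tree : SimpleGraph ι
  isTree : tree.IsTree
  bag : ι → Set V
  subtree : ∀ v : V, (tree.induce {t | v ∈ bag t}).Connected
  covers : ∀ ⦃u v : V⦄, G.Adj u v → ∃ t, u ∈ bag t ∧ v ∈ bag t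

/-- `N_r̄(v) = N(v) \\ N[r]`: the neighbors of `v` outside the closed neighborhood of `r`. -/
def Nbar {V : Type*} (G : SimpleGraph V) (r v : V) : Set V :=
  G.neighborSet v \ closedNbhd G r

/-- `M = N(r) ∪ N_r̄(x) ∪ N_r̄(y)`. -/
def Mset {V : Type*} (G : SimpleGraph V) (r x y : V) : Set V :=
  G.neighborSet r ∪ Nbar G r x ∪ Nbar G r y

/-- `U`: the neighbors of `r` having a neighbor outside `M ∪ {r}`. -/
def Uset {V : Type*} (G : SimpleGraph V) (r x y : V) : Set V :=
  {u ∈ G.neighborSet r | (Nbar G r u \ (Nbar G r x ∪ Nbar G r y)).Nonempty}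

/-- `U₀ = {u ∈ U | u ∉ N(x) ∪ N(y)}`. -/
def U0set {V : Type*} (G : SimpleGraph V) (r x y : V) : Set V :=
  {u ∈ Uset G r x y | u ∉ G.neighborSet x ∪ G.neighborSet y}

/-- `U_x = {u ∈ U | u ∈ N(x) \\ N(y)}`. -/
def Uxset {V : Type*} (G : SimpleGraph V) (r x y : V) : Set V :=
  {u ∈ Uset G r x y | u ∈ G.neighborSet x \ G.neighborSet y}

/-- `U_y = {u ∈ U | u ∈ N(y) \\ N(x)}`. -/
def Uyset {V : Type*} (G : SimpleGraph V) (r x y : V) : Set V :=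
  {u ∈ Uset G r x y | u ∈ G.neighborSet y \ G.neighborSet x}

/-- `W_x = N_r̄(x) \\ N_r̄(y)`. -/
def Wx {V : Type*} (G : SimpleGraph V) (r x y : V) : Set V :=
  Nbar G r x \ Nbar G r y

/-- `W_y = N_r̄(y) \\ N_r̄(x)`. -/
def Wy {V : Type*} (G : SimpleGraph V) (r x y : V) : Set V :=
  Nbar G r y \ Nbar G r x

/-- `W_xy = N_r̄(x) ∩ N_r̄(y)`. -/
def Wxy {V : Type*} (G : SimpleGraph V) (r x y : V) : Set V :=
  Nbar G r x ∩ Nbar G r y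

/-- `C` is a connected component of the subgraph of `G` induced by `A`:
`C ⊆ A`, `G[C]` is connected (hence nonempty), and `C` is maximal with this property. -/
def IsCompOf {V : Type*} (G : SimpleGraph V) (A C : Set V) : Prop :=
  C ⊆ A ∧ (G.induce C).Connected ∧
    ∀ C' : Set V, C ⊆ C' → C' ⊆ A → (G.induce C').Connected → C' = C

/-- The neighborhood of the vertex set `C` in the graph `G − r`: all vertices other than
`r`, outside of `C`, having a neighbor in `C`. -/
def nbhdIn {V : Type*} (G : SimpleGraph V) (r : V) (C : Set V) : Set V :=
  {w | w ≠ r ∧ w ∉ C ∧ ∃ c ∈ C, G.Adj c w}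

theorem IndepSet.not_adj {V : Type*} {G : SimpleGraph V} {s : Set V} (hs : IndepSet G s)
    {a b : V} (ha : a ∈ s) (hb : b ∈ s) : ¬ G.Adj a b := by
  rcases eq_or_ne a b with rfl | hab
  · exact G.irrefl
  · exact hs ha hb hab

theorem exists_indepSet_card_eq_of_le_indepNumOn {V : Type*} [Finite V] (G : SimpleGraph V)
    {S : Set V} {ℓ : ℕ} (h : ℓ ≤ indepNumOn G S) :
    ∃ s : Finset V, ↑s ⊆ S ∧ IndepSet G ↑s ∧ s.card = ℓ := by
  have : Fintype V := Fintype.ofFinite V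
  have hne : {n | ∃ s : Finset V, ↑s ⊆ S ∧ IndepSet G ↑s ∧ s.card = n}.Nonempty :=
    ⟨0, ∅, by simp [IndepSet]⟩
  have hbdd : BddAbove {n | ∃ s : Finset V, ↑s ⊆ S ∧ IndepSet G ↑s ∧ s.card = n} :=
    ⟨Fintype.card V, by rintro n ⟨s, -, -, rfl⟩; exact s.card_le_univ⟩
  obtain ⟨s, hsS, hs, hcard⟩ := Nat.sSup_mem hne hbdd
  obtain ⟨t, hts, rfl⟩ := Finset.exists_subset_card_eq (h.trans_eq hcard.symm)
  exact ⟨t, (Finset.coe_subset.2 hts).trans hsS, hs.mono (Finset.coe_subset.2 hts), rfl⟩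

theorem Free.false_of_adj_iff {W V : Type*} {H : SimpleGraph W} {G : SimpleGraph V}
    (hfree : _root_.Free H G) {f : W → V} (hf : Function.Injective f)
    (hadj : ∀ i j, G.Adj (f i) (f j) ↔ H.Adj i j) : False :=
  hfree.elim ⟨⟨f, hf⟩, hadj _ _⟩

theorem Free.false_of_inducedPath_five {V : Type*} {G : SimpleGraph V}
    (hP5 : _root_.Free (pathGraph 5) G) {a b c d e : V}
    (hab : G.Adj a b) (hbc : G.Adj b c) (hcd : G.Adj c d) (hde : G.Adj d e)
    (hac : ¬ G.Adj a c) (had : ¬ G.Adj a d) (hae : ¬ G.Adj a e)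
    (hbd : ¬ G.Adj b d) (hbe : ¬ G.Adj b e) (hce : ¬ G.Adj c e) : False := by
  have hadj :
      ∀ i j, G.Adj (![a, b, c, d, e] i) (![a, b, c, d, e] j) ↔ (pathGraph 5).Adj i j := by
    intro i j
    fin_cases i <;> fin_cases j <;>
      simp [pathGraph_adj, G.adj_comm, *]
  -- Distinct vertices of `P₅` have distinct neighbourhoods, so `![a, b, c, d, e]` is injective.
  have htwinFree :
      ∀ i j : Fin 5, (∀ k, (pathGraph 5).Adj i k ↔ (pathGraph 5).Adj j k) → i = j := by
    simp only [pathGraph_adj]; decide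
  exact hP5.false_of_adj_iff
    (fun i j hij => htwinFree i j fun k => by rw [← hadj, ← hadj, hij]) hadj

theorem Free.false_of_isCompleteBetween {V : Type*} {G : SimpleGraph V} {ℓ : ℕ}
    (hK : _root_.Free (completeBipartiteGraph (Fin ℓ) (Fin ℓ)) G) {s t : Finset V}
    (hs : s.card = ℓ) (ht : t.card = ℓ) (hsi : IndepSet G ↑s) (hti : IndepSet G ↑t)
    (hst : G.IsCompleteBetween ↑s ↑t) : False := by
  set f : Fin ℓ → V := fun i => (s.equivFinOfCardEq hs).symm i
  set g : Fin ℓ → V := fun i => (t.equivFinOfCardEq ht).symm i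
  have hf : ∀ i, f i ∈ s := fun i => ((s.equivFinOfCardEq hs).symm i).2
  have hg : ∀ i, g i ∈ t := fun i => ((t.equivFinOfCardEq ht).symm i).2
  have hinj : Function.Injective (Sum.elim f g) :=
    (Subtype.val_injective.comp (Equiv.injective _)).sumElim
      (Subtype.val_injective.comp (Equiv.injective _))
      fun i j hij => G.irrefl (hij ▸ hst (hf i) (hg j))
  refine hK.false_of_adj_iff hinj ?_
  rintro (i | i) (j | j)
  · simpa using hsi.not_adj (hf i) (hf j)
  · simpa using hst (hf i) (hg j)
  · simpa using (hst (hf j) (hg i)).symm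
  · simpa using hti.not_adj (hg i) (hg j)

theorem mem_Wx_iff {V : Type*} {G : SimpleGraph V} {r x y a : V} :
    a ∈ Wx G r x y ↔ G.Adj x a ∧ ¬ G.Adj y a ∧ a ≠ r ∧ ¬ G.Adj r a := by
  simp only [Wx, Nbar, closedNbhd, Set.mem_sdiff, Set.mem_insert_iff, mem_neighborSet]
  tauto

theorem isCompleteBetween_Wx_Wy {V : Type*} {G : SimpleGraph V}
    (hP5 : _root_.Free (pathGraph 5) G) {r x y : V} (hrx : G.Adj r x) (hry : G.Adj r y)
    (hnadj : ¬ G.Adj x y) : G.IsCompleteBetween (Wx G r x y) (Wy G r x y) := by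
  intro a ha b hb
  obtain ⟨hxa, hya, -, hra⟩ := mem_Wx_iff.1 ha
  obtain ⟨hyb, hxb, -, hrb⟩ := (mem_Wx_iff (x := y) (y := x)).1 hb
  by_contra hab
  exact hP5.false_of_inducedPath_five hxa.symm hrx.symm hry hyb
    (fun h => hra h.symm) (fun h => hya h.symm) hab hnadj hxb hrb

theorem stmt_15_general (ℓ : ℕ) {V : Type} [Fintype V] (G : SimpleGraph V)
    (hP5 : _root_.Free (pathGraph 5) G)
    (hK : _root_.Free (completeBipartiteGraph (Fin ℓ) (Fin ℓ)) G)
    (r x y : V) (hrx : G.Adj r x) (hry : G.Adj r y) (hnadj : ¬ G.Adj x y) :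
    indepNumOn G (Wx G r x y) ≤ ℓ - 1 ∨ indepNumOn G (Wy G r x y) ≤ ℓ - 1 := by
  by_contra! hbig
  obtain ⟨s, hsW, hs, hscard⟩ :=
    exists_indepSet_card_eq_of_le_indepNumOn G (S := Wx G r x y) (ℓ := ℓ) (by omega)
  obtain ⟨t, htW, ht, htcard⟩ :=
    exists_indepSet_card_eq_of_le_indepNumOn G (S := Wy G r x y) (ℓ := ℓ) (by omega)
  have hst : G.IsCompleteBetween ↑s ↑t := fun a ha b hb =>
    isCompleteBetween_Wx_Wy hP5 hrx hry hnadj (hsW ha) (htW hb)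
  exact hK.false_of_isCompleteBetween hscard htcard hs ht hst

/-- Let `ℓ` be a positive integer, `G` a `{P₅, K_{ℓ,ℓ}}`-free graph,
`r ∈ V(G)`, and `x, y` two distinct nonadjacent neighbors of `r`. Then either
`α(G[W_x]) ≤ ℓ−1` or `α(G[W_y]) ≤ ℓ−1`. -/
theorem stmt_15 (ℓ : ℕ) (hℓ : 0 < ℓ) {V : Type} [Fintype V] (G : SimpleGraph V)
    (hP5 : _root_.Free (pathGraph 5) G)
    (hK : _root_.Free (completeBipartiteGraph (Fin ℓ) (Fin ℓ)) G)
    (r x y : V) (hrx : G.Adj r x) (hry : G.Adj r y) (hxy : x ≠ y) (hnadj : ¬ G.Adj x y) :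
    indepNumOn G (Wx G r x y) ≤ ℓ - 1 ∨ indepNumOn G (Wy G r x y) ≤ ℓ - 1 :=
  stmt_15_general ℓ G hP5 hK r x y hrx hry hnadj
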